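/- arXiv:1911.10060 — 2 statements merged into one kernel-verified Lean document; each statement's English description precedes it below -/
import Mathlib

section
/- Let G : H₁ → H₂ be a linear contraction. If x ∈ H₁ satisfies ‖G x‖ = ‖x‖, then for all y ∈ H₁, ⟪G x, G y⟫ = ⟪x, y⟫. -/
open scoped InnerProductSpace

theorem contraction_norm_preserved_inner
    {H₁ H₂ : Type*} [NormedAddCommGroup H₁] [InnerProductSpace ℂ H₁]
    [NormedAddCommGroup H₂] [InnerProductSpace ℂ H₂]
    [CompleteSpace H₁] [CompleteSpace H₂]
    (G : H₁ →L[ℂ] H₂) (hG : ‖G‖ ≤ 1)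
    (x : H₁) (hx : ‖G x‖ = ‖x‖) :
    ∀ y : H₁, ⟪G x, G y⟫_ℂ = ⟪x, y⟫_ℂ := by
  intro y
  by_cases hx0 : x = 0
  · simp [hx0]
  set u := ContinuousLinearMap.adjoint G (G x) with hu
  have hux : ⟪u, x⟫_ℂ = (‖x‖ : ℂ) ^ 2 := by
    rw [hu, ContinuousLinearMap.adjoint_inner_left, inner_self_eq_norm_sq_to_K, hx]
    norm_cast
  have hnu : ‖u‖ ≤ ‖x‖ := by
    calc ‖u‖ ≤ ‖ContinuousLinearMap.adjoint G‖ * ‖G x‖ :=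
          (ContinuousLinearMap.adjoint G).le_opNorm _
      _ ≤ 1 * ‖x‖ := by
          rw [hx]
          exact mul_le_mul_of_nonneg_right (by rwa [LinearIsometryEquiv.norm_map ContinuousLinearMap.adjoint G])
            (norm_nonneg x)
      _ = ‖x‖ := one_mul _
  have hxpos : (0 : ℝ) < ‖x‖ := norm_pos_iff.mpr hx0
  have hcs : ‖x‖ ^ 2 ≤ ‖u‖ * ‖x‖ := by
    have := norm_inner_le_norm (𝕜 := ℂ) u x
    rw [hux] at this
    simpa using this
  have hnu' : ‖u‖ = ‖x‖ :=
    le_antisymm hnu (by nlinarith)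
  have heq : ⟪u, x⟫_ℂ = (‖u‖ : ℂ) * ‖x‖ := by
    rw [hux, hnu']; ring
  have hux2 : u = x := by
    have h := inner_eq_norm_mul_iff (𝕜 := ℂ).mp heq
    rw [hnu'] at h
    have : (‖x‖ : ℂ) • u = (‖x‖ : ℂ) • x := by
      simpa [Complex.real_smul] using h
    exact smul_right_injective _ (by exact_mod_cast hxpos.ne') this
  calc ⟪G x, G y⟫_ℂ = ⟪u, y⟫_ℂ := (ContinuousLinearMap.adjoint_inner_left G _ _).symm
    _ = ⟪x, y⟫_ℂ := by rw [hux2]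
end

section
/- Let (xₙ) and (yₙ) be sequences in (possibly varying) Hilbert spaces linked by contractions, such that the real sequences ⟪xₙ, xₙ⟫ and ⟪yₙ, yₙ⟫ are Cauchy, and for each n ≤ m there is a contraction G with G xₙ = xₘ and G yₙ = yₘ. Then the sequence of inner products ⟪xₙ, yₙ⟫ is Cauchy in ℂ. -/
open scoped InnerProductSpace

private lemma cs_core_aux {E : Type*} [AddCommGroup E] [Module ℂ E]
    (c : PreInnerProductSpace.Core ℂ E) (u v : E) :
    ‖c.inner u v‖ * ‖c.inner v u‖ ≤ RCLike.re (c.inner u u) * RCLike.re (c.inner v v) := by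
  letI := c
  letI : Inner ℂ E := c.toInner
  exact InnerProductSpace.Core.inner_mul_inner_self_le (𝕜 := ℂ) u v

private lemma key_ineq {E F : Type*} [NormedAddCommGroup E] [InnerProductSpace ℂ E]
    [NormedAddCommGroup F] [InnerProductSpace ℂ F] (G : E →L[ℂ] F) (hG : ‖G‖ ≤ 1)
    (u v : E) :
    ‖⟪u, v⟫_ℂ - ⟪G u, G v⟫_ℂ‖ ^ 2 ≤ (‖u‖ ^ 2 - ‖G u‖ ^ 2) * (‖v‖ ^ 2 - ‖G v‖ ^ 2) := by
  have hle : ∀ w : E, ‖G w‖ ≤ ‖w‖ := fun w =>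
    (G.le_opNorm w).trans (by nlinarith [norm_nonneg w])
  set c : PreInnerProductSpace.Core ℂ E :=
    { inner := fun a b => ⟪a, b⟫_ℂ - ⟪G a, G b⟫_ℂ
      conj_inner_symm := by
        intro a b
        simp [map_sub, inner_conj_symm]
      re_inner_nonneg := by
        intro a
        have h1 : RCLike.re (⟪a, a⟫_ℂ) = ‖a‖ ^ 2 := inner_self_eq_norm_sq a
        have h2 : RCLike.re (⟪G a, G a⟫_ℂ) = ‖G a‖ ^ 2 := inner_self_eq_norm_sq (G a)
        have := hle a
        simp only [map_sub, h1, h2]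
        nlinarith [norm_nonneg a, norm_nonneg (G a)]
      add_left := by
        intro a b d
        simp [inner_add_left, map_add]
        ring
      smul_left := by
        intro a b r
        simp [inner_smul_left]
        ring }
  have h := cs_core_aux c u v
  have hcuv : c.inner u v = ⟪u, v⟫_ℂ - ⟪G u, G v⟫_ℂ := rfl
  have hsymm : ‖c.inner v u‖ = ‖c.inner u v‖ := by
    rw [← c.conj_inner_symm u v, RCLike.norm_conj]
  have hre : ∀ a : E, RCLike.re (c.inner a a) = ‖a‖ ^ 2 - ‖G a‖ ^ 2 := by
    intro a
    have h1 : RCLike.re (⟪a, a⟫_ℂ) = ‖a‖ ^ 2 := inner_self_eq_norm_sq a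
    have h2 : RCLike.re (⟪G a, G a⟫_ℂ) = ‖G a‖ ^ 2 := inner_self_eq_norm_sq (G a)
    show RCLike.re (⟪a, a⟫_ℂ - ⟪G a, G a⟫_ℂ) = _
    rw [map_sub, h1, h2]
  rw [hsymm, hcuv, hre, hre] at h
  calc ‖⟪u, v⟫_ℂ - ⟪G u, G v⟫_ℂ‖ ^ 2
      = ‖⟪u, v⟫_ℂ - ⟪G u, G v⟫_ℂ‖ * ‖⟪u, v⟫_ℂ - ⟪G u, G v⟫_ℂ‖ := sq (‖⟪u, v⟫_ℂ - ⟪G u, G v⟫_ℂ‖) ▸ by ring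
    _ ≤ _ := h

theorem inner_products_cauchy_of_contraction_linked
    {K : ℕ → Type*} [∀ n, NormedAddCommGroup (K n)] [∀ n, InnerProductSpace ℂ (K n)]
    [∀ n, CompleteSpace (K n)]
    (x y : ∀ n, K n)
    (G : ∀ n m, n ≤ m → (K n →L[ℂ] K m))
    (hcontr : ∀ n m (h : n ≤ m), ‖G n m h‖ ≤ 1)
    (hx : ∀ n m (h : n ≤ m), G n m h (x n) = x m)
    (hy : ∀ n m (h : n ≤ m), G n m h (y n) = y m)
    (hxc : CauchySeq fun n => (⟪x n, x n⟫_ℂ : ℂ))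
    (hyc : CauchySeq fun n => (⟪y n, y n⟫_ℂ : ℂ)) :
    CauchySeq fun n => (⟪x n, y n⟫_ℂ : ℂ) := by
  -- squared norms
  have hnx : ∀ n, (⟪x n, x n⟫_ℂ : ℂ) = ((‖x n‖ ^ 2 : ℝ) : ℂ) := fun n => by exact_mod_cast inner_self_eq_norm_sq_to_K (x n)
  have hny : ∀ n, (⟪y n, y n⟫_ℂ : ℂ) = ((‖y n‖ ^ 2 : ℝ) : ℂ) := fun n => by exact_mod_cast inner_self_eq_norm_sq_to_K (y n)
  rw [Metric.cauchySeq_iff] at hxc hyc ⊢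
  intro ε hε
  obtain ⟨N₁, hN₁⟩ := hxc ε hε
  obtain ⟨N₂, hN₂⟩ := hyc ε hε
  refine ⟨max N₁ N₂, fun m hm n hn => ?_⟩
  -- wlog-free symmetric treatment
  have main : ∀ a b : ℕ, a ≤ b → max N₁ N₂ ≤ a →
      dist (⟪x b, y b⟫_ℂ) (⟪x a, y a⟫_ℂ) < ε := by
    intro a b hab ha
    have hb : max N₁ N₂ ≤ b := le_trans ha hab
    have hgx : G a b hab (x a) = x b := hx a b hab
    have hgy : G a b hab (y a) = y b := hy a b hab
    have key := key_ineq (G a b hab) (hcontr a b hab) (x a) (y a)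
    rw [hgx, hgy] at key
    have hdx : dist (⟪x a, x a⟫_ℂ) (⟪x b, x b⟫_ℂ) < ε :=
      hN₁ a (le_trans (le_max_left _ _) ha) b (le_trans (le_max_left _ _) hb)
    have hdy : dist (⟪y a, y a⟫_ℂ) (⟪y b, y b⟫_ℂ) < ε :=
      hN₂ a (le_trans (le_max_right _ _) ha) b (le_trans (le_max_right _ _) hb)
    have hdx' : |‖x a‖ ^ 2 - ‖x b‖ ^ 2| < ε := by
      rw [hnx a, hnx b, Complex.dist_eq, ← Complex.ofReal_sub, Complex.norm_real, Real.norm_eq_abs] at hdx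
      exact hdx
    have hdy' : |‖y a‖ ^ 2 - ‖y b‖ ^ 2| < ε := by
      rw [hny a, hny b, Complex.dist_eq, ← Complex.ofReal_sub, Complex.norm_real, Real.norm_eq_abs] at hdy
      exact hdy
    have hmx : ‖x b‖ ≤ ‖x a‖ := by
      rw [← hgx]
      exact ((G a b hab).le_opNorm (x a)).trans
        (by nlinarith [norm_nonneg (x a), hcontr a b hab])
    have hmy : ‖y b‖ ≤ ‖y a‖ := by
      rw [← hgy]
      exact ((G a b hab).le_opNorm (y a)).trans
        (by nlinarith [norm_nonneg (y a), hcontr a b hab])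
    have hx2 : 0 ≤ ‖x a‖ ^ 2 - ‖x b‖ ^ 2 := by nlinarith [norm_nonneg (x b)]
    have hy2 : 0 ≤ ‖y a‖ ^ 2 - ‖y b‖ ^ 2 := by nlinarith [norm_nonneg (y b)]
    rw [abs_of_nonneg hx2] at hdx'
    rw [abs_of_nonneg hy2] at hdy'
    have : ‖⟪x a, y a⟫_ℂ - ⟪x b, y b⟫_ℂ‖ ^ 2 < ε ^ 2 := by
      calc ‖⟪x a, y a⟫_ℂ - ⟪x b, y b⟫_ℂ‖ ^ 2 ≤ _ := key
        _ < ε ^ 2 := by nlinarith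
    have hnd : ‖⟪x a, y a⟫_ℂ - ⟪x b, y b⟫_ℂ‖ < ε := by
      nlinarith [norm_nonneg (⟪x a, y a⟫_ℂ - ⟪x b, y b⟫_ℂ)]
    rw [dist_comm, Complex.dist_eq]
    simpa using hnd
  rcases le_total m n with h | h
  · rw [dist_comm]; exact main m n h hm
  · exact main n m h hn
end
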